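/- arXiv:1402.5384 — 4 statements merged into one kernel-verified Lean document; each statement's English description precedes it below -/
import Mathlib

section
/- Let I ≥ 2, J ≥ 2, let π = (π_1,...,π_J)^T be a probability vector with all entries positive, let π* = (π_1,...,π_{J-1})^T, let n_1,...,n_I be positive reals with n = n_1 + ... + n_I, set ν_i = n_i/n and ν* = (ν_1,...,ν_{I-1})^T. Let W be the IJ × I(J-1) matrix W = A ⊗ B, where A is the I × I matrix whose first I-1 rows are (1_{I-1}, Id_{I-1}) (a column of ones followed by the identity) and whose last row is (1, 0,...,0), and B is the J × (J-1) matrix consisting of the (J-1)×(J-1) identity matrix with a row of zeros appended at the bottom. Then W^T (⊕_{i=1}^I ν_i (D_π − π π^T)) W = M ⊗ (D_{π*} − π* π*^T), where ⊕ denotes the block-diagonal direct sum, D_v denotes the diagonal matrix with diagonal v, and M is the I × I block matrix with (1,1)-entry 1, first row (after the corner) ν*^T, first column (after the corner) ν*, and lower-right (I-1)×(I-1) block D_{ν*}. In particular, if n_i/n → ν_i as n → ∞, the limiting Fisher information matrix under the homogeneity hypothesis equals M ⊗ (D_{π*} − π* π*^T) with the limiting ν. -/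
open Matrix
open scoped Kronecker

/-!
The direct sum `⊕ᵢ νᵢ Σ` of equal blocks is the Kronecker product `D_ν ⊗ Σ`, and `W = A ⊗ B`, so
by the mixed-product rule `Wᵀ (D_ν ⊗ Σ) W = (Aᵀ D_ν A) ⊗ (Bᵀ Σ B)`. Here `Bᵀ Σ B` is the leading
principal `(J-1) × (J-1)` block of `Σ = D_π − π πᵀ`, which is `D_{π*} − π* π*ᵀ`, and `Aᵀ D_ν A`
is computed entrywise to be `M`, its corner entry being `∑ᵢ νᵢ = 1`.
-/

namespace Matrix

variable {R ι κ μ : Type*}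

theorem blockDiagonal_smul_submatrix_swap [Semiring R] [DecidableEq ι] (c : ι → R)
    (S : Matrix μ μ R) :
    (blockDiagonal fun i => c i • S).submatrix Prod.swap Prod.swap = diagonal c ⊗ₖ S := by
  ext ⟨i, j⟩ ⟨i', j'⟩
  by_cases h : i = i' <;> simp [blockDiagonal_apply, h]

theorem fromRows_one_zero_transpose_mul_mul [Semiring R] [Fintype μ] [Fintype κ] [DecidableEq μ]
    (X : Matrix (μ ⊕ κ) (μ ⊕ κ) R) :
    let B : Matrix (μ ⊕ κ) μ R := fromRows 1 0
    Bᵀ * X * B = X.submatrix Sum.inl Sum.inl := by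
  ext i j
  simp [mul_apply, Fintype.sum_sum_type, one_apply]

theorem fromBlocks_ones_one_transpose_mul_diagonal_mul [Semiring R] [Fintype ι] [Fintype κ]
    [DecidableEq ι] [DecidableEq κ] (ν : ι ⊕ κ → R) :
    let A : Matrix (ι ⊕ κ) (Unit ⊕ ι) R := fromBlocks (of fun _ _ => 1) 1 (of fun _ _ => 1) 0
    Aᵀ * diagonal ν * A =
      fromBlocks (of fun _ _ => ∑ r, ν r) (of fun _ j => ν (Sum.inl j))
        (of fun i _ => ν (Sum.inl i)) (diagonal fun i => ν (Sum.inl i)) := by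
  ext (a | a) (c | c) <;> simp [mul_apply, Fintype.sum_sum_type, one_apply, diagonal_apply]
  grind

theorem diagonal_sub_vecMulVec_submatrix [Ring R] [DecidableEq ι] [DecidableEq μ] (p : ι → R)
    {e : μ → ι} (he : Function.Injective e) :
    (diagonal p - vecMulVec p p).submatrix e e = diagonal (p ∘ e) - vecMulVec (p ∘ e) (p ∘ e) := by
  rw [← submatrix_diagonal _ _ he]
  rfl

end Matrix

theorem Finset.sum_div_sum_eq_one {ι K : Type*} [Field K] (s : Finset ι) {f : ι → K}
    (hf : ∑ i ∈ s, f i ≠ 0) : ∑ i ∈ s, f i / ∑ j ∈ s, f j = 1 := by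
  rw [← Finset.sum_div, div_self hf]

theorem stmt0_general (k m : ℕ)
    -- π is a probability vector of length J = m+1 with positive entries
    (pi : Fin m ⊕ Unit → ℝ)
    -- sample sizes n₁,...,n_I > 0 with total n and fractions ν i = nᵢ / n
    (nvec : Fin k ⊕ Unit → ℝ) (hnpos : ∀ i, 0 < nvec i)
    (n : ℝ) (hn : n = ∑ i, nvec i)
    (ν : Fin k ⊕ Unit → ℝ) (hν : ∀ i, ν i = nvec i / n)
    -- A : I × I, first I−1 rows are (1_{I−1} | Id_{I−1}), last row is (1, 0,…,0)
    (A : Matrix (Fin k ⊕ Unit) (Unit ⊕ Fin k) ℝ)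
    (hA : A = Matrix.fromBlocks (Matrix.of fun _ _ => (1 : ℝ)) 1
        (Matrix.of fun _ _ => (1 : ℝ)) 0)
    -- B : J × (J−1), the identity with a row of zeros appended at the bottom
    (B : Matrix (Fin m ⊕ Unit) (Fin m) ℝ)
    (hB : B = Matrix.fromRows (1 : Matrix (Fin m) (Fin m) ℝ) 0)
    -- W = A ⊗ B
    (W : Matrix ((Fin k ⊕ Unit) × (Fin m ⊕ Unit)) ((Unit ⊕ Fin k) × Fin m) ℝ)
    (hW : W = A ⊗ₖ B)
    -- the J × J multinomial covariance matrix D_π − π πᵀ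
    (Sig : Matrix (Fin m ⊕ Unit) (Fin m ⊕ Unit) ℝ)
    (hSig : Sig = Matrix.diagonal pi - Matrix.vecMulVec pi pi)
    -- the block-diagonal direct sum ⊕ᵢ νᵢ Sig (block index first)
    (D : Matrix ((Fin k ⊕ Unit) × (Fin m ⊕ Unit)) ((Fin k ⊕ Unit) × (Fin m ⊕ Unit)) ℝ)
    (hD : D = (Matrix.blockDiagonal fun i => ν i • Sig).submatrix Prod.swap Prod.swap)
    -- M : I × I, corner 1, first row ν*ᵀ, first column ν*, lower-right block D_{ν*}
    (M : Matrix (Unit ⊕ Fin k) (Unit ⊕ Fin k) ℝ)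
    (hM : M = Matrix.fromBlocks 1 (Matrix.of fun _ j => ν (Sum.inl j))
        (Matrix.of fun i _ => ν (Sum.inl i)) (Matrix.diagonal fun i => ν (Sum.inl i))) :
    Wᵀ * D * W =
      M ⊗ₖ (Matrix.diagonal (fun j : Fin m => pi (Sum.inl j)) -
        Matrix.vecMulVec (fun j : Fin m => pi (Sum.inl j)) (fun j : Fin m => pi (Sum.inl j))) := by
  have hνsum : ∑ i, ν i = 1 := by
    simp only [hν, hn]
    exact Finset.sum_div_sum_eq_one _ (Finset.sum_pos (fun i _ => hnpos i) Finset.univ_nonempty).ne'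
  have hAM : Aᵀ * diagonal ν * A = M := by
    rw [hA, fromBlocks_ones_one_transpose_mul_diagonal_mul, hνsum, hM]
    congr
  have hBS : Bᵀ * Sig * B = diagonal (fun j : Fin m => pi (Sum.inl j)) -
      vecMulVec (fun j : Fin m => pi (Sum.inl j)) (fun j : Fin m => pi (Sum.inl j)) := by
    rw [hB, fromRows_one_zero_transpose_mul_mul, hSig,
      diagonal_sub_vecMulVec_submatrix _ Sum.inl_injective]
    rfl
  rw [hW, hD, blockDiagonal_smul_submatrix_swap, ← kroneckerMap_transpose,
    ← mul_kronecker_mul, ← mul_kronecker_mul, hAM, hBS]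

/-- Theorem 1 of the paper: with `I = k+1`, `J = m+1`, the Fisher
information matrix `Wᵀ (⊕ᵢ νᵢ (D_π − π πᵀ)) W` of the saturated loglinear model
under the homogeneity hypothesis factors as `M ⊗ (D_{π*} − π* π*ᵀ)`.
Row/column indices of size `J` are modelled by `Fin m ⊕ Unit` (the `Unit`
component being the last category), and correspondingly for size `I`. -/
theorem stmt0 (k m : ℕ) (hk : 1 ≤ k) (hm : 1 ≤ m)
    -- π is a probability vector of length J = m+1 with positive entries
    (pi : Fin m ⊕ Unit → ℝ) (hπpos : ∀ j, 0 < pi j) (hπsum : ∑ j, pi j = 1)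
    -- sample sizes n₁,...,n_I > 0 with total n and fractions ν i = nᵢ / n
    (nvec : Fin k ⊕ Unit → ℝ) (hnpos : ∀ i, 0 < nvec i)
    (n : ℝ) (hn : n = ∑ i, nvec i)
    (ν : Fin k ⊕ Unit → ℝ) (hν : ∀ i, ν i = nvec i / n)
    -- A : I × I, first I−1 rows are (1_{I−1} | Id_{I−1}), last row is (1, 0,…,0)
    (A : Matrix (Fin k ⊕ Unit) (Unit ⊕ Fin k) ℝ)
    (hA : A = Matrix.fromBlocks (Matrix.of fun _ _ => (1 : ℝ)) 1
        (Matrix.of fun _ _ => (1 : ℝ)) 0)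
    -- B : J × (J−1), the identity with a row of zeros appended at the bottom
    (B : Matrix (Fin m ⊕ Unit) (Fin m) ℝ)
    (hB : B = Matrix.fromRows (1 : Matrix (Fin m) (Fin m) ℝ) 0)
    -- W = A ⊗ B
    (W : Matrix ((Fin k ⊕ Unit) × (Fin m ⊕ Unit)) ((Unit ⊕ Fin k) × Fin m) ℝ)
    (hW : W = A ⊗ₖ B)
    -- the J × J multinomial covariance matrix D_π − π πᵀ
    (Sig : Matrix (Fin m ⊕ Unit) (Fin m ⊕ Unit) ℝ)
    (hSig : Sig = Matrix.diagonal pi - Matrix.vecMulVec pi pi)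
    -- the block-diagonal direct sum ⊕ᵢ νᵢ Sig (block index first)
    (D : Matrix ((Fin k ⊕ Unit) × (Fin m ⊕ Unit)) ((Fin k ⊕ Unit) × (Fin m ⊕ Unit)) ℝ)
    (hD : D = (Matrix.blockDiagonal fun i => ν i • Sig).submatrix Prod.swap Prod.swap)
    -- M : I × I, corner 1, first row ν*ᵀ, first column ν*, lower-right block D_{ν*}
    (M : Matrix (Unit ⊕ Fin k) (Unit ⊕ Fin k) ℝ)
    (hM : M = Matrix.fromBlocks 1 (Matrix.of fun _ j => ν (Sum.inl j))
        (Matrix.of fun i _ => ν (Sum.inl i)) (Matrix.diagonal fun i => ν (Sum.inl i))) :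
    Wᵀ * D * W =
      M ⊗ₖ (Matrix.diagonal (fun j : Fin m => pi (Sum.inl j)) -
        Matrix.vecMulVec (fun j : Fin m => pi (Sum.inl j)) (fun j : Fin m => pi (Sum.inl j))) :=
  stmt0_general k m pi nvec hnpos n hn ν hν A hA B hB W hW Sig hSig D hD M hM
end

section
/- Let q = (q_1,...,q_K)^T (K ≥ 2) be a probability vector with all entries positive, q* = (q_1,...,q_{K-1})^T, and K(q) = G_{K-1} D_{q*}^{-1} G_{K-1}^T + (1/q_K) e_{K-1} e_{K-1}^T. Then K(q) is invertible and K(q)^{-1} = T_{K-1}^T (D_{q*} − q* q*^T) T_{K-1}, where T_{K-1} = G_{K-1}^{-1} is the (K-1)×(K-1) upper triangular matrix with all entries on and above the diagonal equal to 1. -/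
/-!
Because `T e = 𝟙`, the vector `e` equals `G 𝟙`, so `K(q) = G (D⁻¹ + q_K⁻¹ 𝟙 𝟙ᵀ) Gᵀ` with
`D = D_{q*}`. By Sherman–Morrison the middle factor has inverse `D - q* q*ᵀ`, the
normalisation being exactly `∑ q* = 1 - q_K`; conjugating back with `G⁻¹ = T` gives the formula.
-/

open Matrix

/-- `G_h`: the h×h matrix with 1's on the diagonal, −1's on the superdiagonal. -/
def Gmat (h : ℕ) : Matrix (Fin h) (Fin h) ℝ :=
  Matrix.of fun i j => if i = j then 1 else if (j : ℕ) = (i : ℕ) + 1 then -1 else 0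

/-- `T_h = G_h⁻¹`: the h×h upper triangular matrix of ones. -/
def Tmat (h : ℕ) : Matrix (Fin h) (Fin h) ℝ :=
  Matrix.of fun i j => if i ≤ j then 1 else 0

/-- `e_{K-1}`: the last standard unit vector of ℝ^{K-1}. -/
def lastUnitVec (h : ℕ) : Fin h → ℝ := fun i => if (i : ℕ) + 1 = h then 1 else 0

/-- `K(q) = G_{K-1} D_{q*}⁻¹ G_{K-1}ᵀ + (1/q_K) e_{K-1} e_{K-1}ᵀ`. -/
noncomputable def Kmat {K : ℕ} (q : Fin (K + 1) → ℝ) : Matrix (Fin K) (Fin K) ℝ :=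
  Gmat K * Matrix.diagonal (fun j : Fin K => (q j.castSucc)⁻¹) * (Gmat K)ᵀ +
    (1 / q (Fin.last K)) • Matrix.vecMulVec (lastUnitVec K) (lastUnitVec K)

lemma Gmat_mul_apply {h : ℕ} {n : Type*} (A : Matrix (Fin h) n ℝ) (i : Fin h) (j : n) :
    (Gmat h * A) i j = A i j - if hi : (i : ℕ) + 1 < h then A ⟨i + 1, hi⟩ j else 0 := by
  have hG : ∀ k, Gmat h i k = (if i = k then 1 else 0) - if (k : ℕ) = i + 1 then 1 else 0 := by
    intro k
    by_cases hik : i = k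
    · subst hik; simp [Gmat]
    · simp only [Gmat, of_apply, hik, if_false]; split_ifs <;> norm_num
  simp only [mul_apply, hG, sub_mul, ite_mul, one_mul, zero_mul, Finset.sum_sub_distrib,
    Finset.sum_ite_eq, Finset.mem_univ, if_true]
  congr 1
  split_ifs with hi
  · simp_rw [← Fin.ext_iff (b := ⟨i + 1, hi⟩)]
    exact Fintype.sum_ite_eq' ..
  · exact Finset.sum_eq_zero fun k _ => if_neg (by omega)

lemma Gmat_mul_Tmat (h : ℕ) : Gmat h * Tmat h = 1 := by
  ext i j
  rw [Gmat_mul_apply, one_apply]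
  simp only [Tmat, of_apply, Fin.le_def, Fin.ext_iff]
  split_ifs <;> first | omega | norm_num

lemma Tmat_mul_Gmat (h : ℕ) : Tmat h * Gmat h = 1 :=
  mul_eq_one_comm.mp (Gmat_mul_Tmat h)

lemma Tmat_mulVec_lastUnitVec (h : ℕ) : Tmat h *ᵥ lastUnitVec h = 1 := by
  funext i
  have hi := i.isLt
  change ∑ j, Tmat h i j * lastUnitVec h j = 1
  rw [Fintype.sum_eq_single ⟨h - 1, by omega⟩]
  · simp only [Tmat, lastUnitVec, of_apply, Fin.le_def]
    rw [if_pos (by omega), if_pos (by omega), one_mul]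
  · intro k hk
    have hk' : (k : ℕ) ≠ h - 1 := fun hk_eq => hk (Fin.ext hk_eq)
    have hk_lt := k.isLt
    exact mul_eq_zero_of_right _ (if_neg (by omega))

lemma Gmat_mulVec_one (h : ℕ) : Gmat h *ᵥ 1 = lastUnitVec h := by
  rw [← Tmat_mulVec_lastUnitVec, mulVec_mulVec, Gmat_mul_Tmat, one_mulVec]

lemma Kmat_eq_Gmat_mul_mul_transpose {K : ℕ} (q : Fin (K + 1) → ℝ) :
    Kmat q = Gmat K *
      (diagonal (fun j : Fin K => (q j.castSucc)⁻¹) + (1 / q (Fin.last K)) • vecMulVec 1 1) *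
        (Gmat K)ᵀ := by
  rw [Kmat, mul_add, add_mul, Matrix.mul_smul, smul_mul, mul_vecMulVec, vecMulVec_mul,
    vecMul_transpose, Gmat_mulVec_one]

theorem diagonal_inv_add_smul_vecMulVec_one_mul {n 𝕜 : Type*} [Fintype n] [DecidableEq n]
    [Field 𝕜] (d : n → 𝕜) (hd : ∀ i, d i ≠ 0) (c : 𝕜) (hc : c * (1 - ∑ i, d i) = 1) :
    (diagonal (fun i => (d i)⁻¹) + c • vecMulVec 1 1) * (diagonal d - vecMulVec d d) = 1 := by
  have hdiag : diagonal (fun i => (d i)⁻¹) * diagonal d = 1 := by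
    rw [diagonal_mul_diagonal, ← diagonal_one]
    exact congrArg diagonal (funext fun i => inv_mul_cancel₀ (hd i))
  have hdiag_vec : diagonal (fun i => (d i)⁻¹) *ᵥ d = 1 :=
    funext fun i => by simp [mulVec_diagonal, hd i]
  have hone_diag : (1 : n → 𝕜) ᵥ* diagonal d = d := funext fun i => by simp [vecMul_diagonal]
  have hcoef : c • d - c • (∑ i, d i) • d = d := by
    funext i
    simp only [Pi.sub_apply, Pi.smul_apply, smul_eq_mul]
    linear_combination d i * hc
  rw [add_mul, mul_sub, mul_sub, hdiag, mul_vecMulVec, hdiag_vec, smul_mul, vecMulVec_mul,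
    hone_diag, smul_mul, vecMulVec_mul_vecMulVec, one_dotProduct, ← vecMulVec_smul,
    ← vecMulVec_smul, ← vecMulVec_sub, hcoef, sub_add_cancel]

theorem stmt4_general (m : ℕ)
    (q : Fin (m + 1) → ℝ) (hpos : ∀ j, 0 < q j) (hsum : ∑ j, q j = 1) :
    Gmat m * Tmat m = 1 ∧ Tmat m * Gmat m = 1 ∧
    IsUnit (Kmat q) ∧
    (Kmat q)⁻¹ = (Tmat m)ᵀ *
        (Matrix.diagonal (fun j : Fin m => q j.castSucc) -
          Matrix.vecMulVec (fun j : Fin m => q j.castSucc) (fun j : Fin m => q j.castSucc)) *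
        Tmat m := by
  set d : Fin m → ℝ := fun j => q j.castSucc
  have hqK : q (Fin.last m) ≠ 0 := (hpos _).ne'
  have hsum_d : ∑ j, d j = 1 - q (Fin.last m) := by
    rw [← hsum, Fin.sum_univ_castSucc, add_sub_cancel_right]
  have hinner := diagonal_inv_add_smul_vecMulVec_one_mul d (fun j => (hpos _).ne')
    (1 / q (Fin.last m)) (by rw [hsum_d, sub_sub_cancel, one_div_mul_cancel hqK])
  have hGT : (Gmat m)ᵀ * (Tmat m)ᵀ = 1 := by
    rw [← transpose_mul, Tmat_mul_Gmat, transpose_one]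
  have hright : Kmat q * ((Tmat m)ᵀ * (diagonal d - vecMulVec d d) * Tmat m) = 1 :=
    calc _ = Gmat m * ((diagonal (fun j => (d j)⁻¹) + (1 / q (Fin.last m)) • vecMulVec 1 1) *
            ((Gmat m)ᵀ * (Tmat m)ᵀ) * (diagonal d - vecMulVec d d)) * Tmat m := by
          rw [Kmat_eq_Gmat_mul_mul_transpose]; simp only [Matrix.mul_assoc]; rfl
      _ = 1 := by rw [hGT, Matrix.mul_one, hinner, Matrix.mul_one, Gmat_mul_Tmat]
  exact ⟨Gmat_mul_Tmat m, Tmat_mul_Gmat m,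
    (isUnit_iff_isUnit_det _).mpr (isUnit_det_of_right_inverse hright), inv_eq_right_inv hright⟩

/-- formula (H-1-b) of the paper: `T_{K-1}` is the inverse of
`G_{K-1}`, `K(q)` is invertible and
`K(q)⁻¹ = T_{K-1}ᵀ (D_{q*} − q* q*ᵀ) T_{K-1}` (here `K = m+1`, `m ≥ 1`). -/
theorem stmt4 (m : ℕ) (hm : 1 ≤ m)
    (q : Fin (m + 1) → ℝ) (hpos : ∀ j, 0 < q j) (hsum : ∑ j, q j = 1) :
    Gmat m * Tmat m = 1 ∧ Tmat m * Gmat m = 1 ∧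
    IsUnit (Kmat q) ∧
    (Kmat q)⁻¹ = (Tmat m)ᵀ *
        (Matrix.diagonal (fun j : Fin m => q j.castSucc) -
          Matrix.vecMulVec (fun j : Fin m => q j.castSucc) (fun j : Fin m => q j.castSucc)) *
        Tmat m :=
  stmt4_general m q hpos hsum
end

section
/- Let I ≥ 2, J ≥ 2, n_1,...,n_I > 0, n = n_1 + ... + n_I. Consider the saturated loglinear model log p_{ij} = u + u_{1(i)} + θ_{2(j)} + θ_{12(ij)} for i = 1,...,I, j = 1,...,J, with identifiability constraints u_{1(I)} = 0, θ_{2(J)} = 0, θ_{12(iJ)} = 0 for i = 1,...,I-1, and θ_{12(Ij)} = 0 for j = 1,...,J. If the product-multinomial constraints Σ_{j=1}^J p_{ij} = n_i/n hold for all i = 1,...,I, then for each i = 1,...,I-1, u_{1(i)} = log(n_i/n_I) + log( (1 + Σ_{j=1}^{J-1} exp(θ_{2(j)})) / (1 + Σ_{j=1}^{J-1} exp(θ_{2(j)} + θ_{12(ij)})) ). -/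
/-! Exponentiating the model, the row sums factor as
`n_i / n = e^{u + u_{1(i)}} (1 + ∑_{j<J} e^{θ_{2(j)} + θ_{12(ij)}})`, and for the last row
`n_I / n = e^u (1 + ∑_{j<J} e^{θ_{2(j)}})`. Dividing the two eliminates both `u` and `n`;
taking logarithms gives the formula. -/

open Real

lemma sum_eq_exp_mul_sum_exp {ι : Type*} [Fintype ι] {p θ : ι → ℝ} {c : ℝ}
    (hp : ∀ j, 0 < p j) (hlog : ∀ j, log (p j) = c + θ j) :
    ∑ j, p j = exp c * ∑ j, exp (θ j) := by
  rw [Finset.mul_sum]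
  refine Finset.sum_congr rfl fun j _ => ?_
  rw [← exp_add, ← hlog, exp_log (hp j)]

lemma sum_exp_eq_one_add_sum_exp_castSucc {m : ℕ} {θ : Fin (m + 1) → ℝ}
    (hθ : θ (Fin.last m) = 0) :
    ∑ j, exp (θ j) = 1 + ∑ j : Fin m, exp (θ j.castSucc) := by
  rw [Fin.sum_univ_castSucc, hθ, exp_zero, add_comm]

lemma eq_log_div_add_log_div_of_exp_mul {u x a b n A B : ℝ} (hA : 0 < A) (hB : 0 < B)
    (ha : exp (u + x) * B = a / n) (hb : exp u * A = b / n) :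
    x = log (a / b) + log (A / B) := by
  have hn : n ≠ 0 := by
    rintro rfl
    rw [div_zero] at ha
    exact (mul_pos (exp_pos _) hB).ne' ha
  have hab : a / b = exp x * (B / A) := by
    rw [← div_div_div_cancel_right₀ hn, ← ha, ← hb, exp_add]
    field_simp
  rw [hab, log_mul (exp_pos x).ne' (div_pos hB hA).ne', log_exp, log_div hB.ne' hA.ne',
    log_div hA.ne' hB.ne']
  ring

theorem stmt10_general (k m : ℕ)
    (nvec : Fin (k + 1) → ℝ)
    (n : ℝ)
    (p : Fin (k + 1) → Fin (m + 1) → ℝ) (hppos : ∀ i j, 0 < p i j)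
    (u : ℝ) (u1 : Fin (k + 1) → ℝ) (θ2 : Fin (m + 1) → ℝ)
    (θ12 : Fin (k + 1) → Fin (m + 1) → ℝ)
    (hmodel : ∀ i j, Real.log (p i j) = u + u1 i + θ2 j + θ12 i j)
    (hu1 : u1 (Fin.last k) = 0)
    (hθ2 : θ2 (Fin.last m) = 0)
    (hθ12a : ∀ i : Fin k, θ12 i.castSucc (Fin.last m) = 0)
    (hθ12b : ∀ j, θ12 (Fin.last k) j = 0)
    (hconstr : ∀ i, ∑ j, p i j = nvec i / n) :
    ∀ i : Fin k,
      u1 i.castSucc = Real.log (nvec i.castSucc / nvec (Fin.last k)) +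
        Real.log ((1 + ∑ j : Fin m, Real.exp (θ2 j.castSucc)) /
          (1 + ∑ j : Fin m, Real.exp (θ2 j.castSucc + θ12 i.castSucc j.castSucc))) := by
  intro i
  have hrow : ∀ a, exp (u + u1 a) * ∑ j, exp (θ2 j + θ12 a j) = nvec a / n := fun a => by
    rw [← hconstr a]
    exact (sum_eq_exp_mul_sum_exp (hppos a) fun j => by rw [hmodel]; ring).symm
  refine eq_log_div_add_log_div_of_exp_mul (u := u) (n := n) (by positivity) (by positivity)
    ?_ ?_
  · rw [← hrow, sum_exp_eq_one_add_sum_exp_castSucc (by simp [hθ2, hθ12a])]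
  · simpa [hu1, hθ12b, sum_exp_eq_one_add_sum_exp_castSucc hθ2] using hrow (Fin.last k)

/-- formula (theta1) of the paper: in the saturated loglinear
model `log p_{ij} = u + u_{1(i)} + θ_{2(j)} + θ_{12(ij)}` (with `I = k+1`,
`J = m+1`) under the identifiability constraints and the product-multinomial
constraints `∑_j p_{ij} = n_i/n`, the redundant row effects satisfy
`u_{1(i)} = log(n_i/n_I) + log((1 + ∑_j e^{θ_{2(j)}})/(1 + ∑_j e^{θ_{2(j)}+θ_{12(ij)}}))`. -/
theorem stmt10 (k m : ℕ) (hk : 1 ≤ k) (hm : 1 ≤ m)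
    (nvec : Fin (k + 1) → ℝ) (hnpos : ∀ i, 0 < nvec i)
    (n : ℝ) (hn : n = ∑ i, nvec i)
    (p : Fin (k + 1) → Fin (m + 1) → ℝ) (hppos : ∀ i j, 0 < p i j)
    (u : ℝ) (u1 : Fin (k + 1) → ℝ) (θ2 : Fin (m + 1) → ℝ)
    (θ12 : Fin (k + 1) → Fin (m + 1) → ℝ)
    (hmodel : ∀ i j, Real.log (p i j) = u + u1 i + θ2 j + θ12 i j)
    (hu1 : u1 (Fin.last k) = 0)
    (hθ2 : θ2 (Fin.last m) = 0)
    (hθ12a : ∀ i : Fin k, θ12 i.castSucc (Fin.last m) = 0)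
    (hθ12b : ∀ j, θ12 (Fin.last k) j = 0)
    (hconstr : ∀ i, ∑ j, p i j = nvec i / n) :
    ∀ i : Fin k,
      u1 i.castSucc = Real.log (nvec i.castSucc / nvec (Fin.last k)) +
        Real.log ((1 + ∑ j : Fin m, Real.exp (θ2 j.castSucc)) /
          (1 + ∑ j : Fin m, Real.exp (θ2 j.castSucc + θ12 i.castSucc j.castSucc))) :=
  stmt10_general k m nvec n p hppos u u1 θ2 θ12 hmodel hu1 hθ2 hθ12a hθ12b hconstr
end

section
/- Let F be a k×k real symmetric positive definite matrix, let R be an r×k real matrix with linearly independent rows (r ≤ k), and let R(S) be the s×k submatrix of R consisting of the rows of R indexed by a subset S of {1,...,r} with s = card(S). Define P(S) = F^{-1} − F^{-1} R(S)^T (R(S) F^{-1} R(S)^T)^{-1} R(S) F^{-1} and P = F^{-1} − F^{-1} R^T (R F^{-1} R^T)^{-1} R F^{-1}. Then (P(S) − P)^T F (P(S) − P) = P(S) − P; in particular, if A is any k×k matrix with A^T A = F, the matrix A (P(S) − P) A^T is symmetric and idempotent. -/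
/-!
Write `G = F⁻¹` and `Q(B) = G Bᵀ (B G Bᵀ)⁻¹ B G`, so that `P(S) - P = Q(R) - Q(R(S))`.
`Q(B) F` is the projection onto the column space of `G Bᵀ`, orthogonal for the inner product
given by `F`. Since `R(S) = E R` for a row selection `E`, these projections are nested:
`Q(R(S)) F Q(R) = Q(R(S))`, and the difference of two nested `F`-idempotents is again
`F`-idempotent. Conjugating by `A` with `Aᵀ A = F` turns `F`-idempotency into idempotency.
-/

open Matrix

theorem sub_mul_mul_sub_eq_sub {R : Type*} [Ring R] {X Y F : R} (hX : X * F * X = X)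
    (hY : Y * F * Y = Y) (hXY : X * F * Y = Y) (hYX : Y * F * X = Y) :
    (X - Y) * F * (X - Y) = X - Y := by
  rw [sub_mul, sub_mul, mul_sub, mul_sub, hX, hY, hXY, hYX]
  abel

namespace Matrix

section Correction

variable {m m' n : Type*} [Fintype m] [DecidableEq m] [Fintype m'] [DecidableEq m']
  [Fintype n] {α : Type*} [CommRing α]

/-- The paper's `P(S)` is `F⁻¹ - constraintCorrection F⁻¹ R(S)`. -/
noncomputable def constraintCorrection (G : Matrix n n α) (B : Matrix m n α) : Matrix n n α :=
  G * Bᵀ * (B * G * Bᵀ)⁻¹ * B * G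

theorem IsSymm.constraintCorrection {G : Matrix n n α} (hG : G.IsSymm) (B : Matrix m n α) :
    (constraintCorrection G B).IsSymm := by
  have hM : (B * G * Bᵀ).IsSymm := by
    simp only [IsSymm, transpose_mul, transpose_transpose, hG.eq, Matrix.mul_assoc]
  simp only [IsSymm, Matrix.constraintCorrection, transpose_mul, transpose_transpose, hG.eq,
    hM.inv.eq]
  simp only [Matrix.mul_assoc]

theorem constraintCorrection_mul_mul_constraintCorrection [DecidableEq n] {G F : Matrix n n α}
    (hGF : G * F = 1) {B : Matrix m n α} (hB : IsUnit (B * G * Bᵀ).det) (E : Matrix m' m α) :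
    constraintCorrection G (E * B) * F * constraintCorrection G B =
      constraintCorrection G (E * B) := by
  have hGFG : G * F * G = G := by rw [hGF, Matrix.one_mul]
  have hEB : E * B * G * Bᵀ * (B * G * Bᵀ)⁻¹ * B = E * B :=
    calc E * B * G * Bᵀ * (B * G * Bᵀ)⁻¹ * B
        = E * ((B * G * Bᵀ) * (B * G * Bᵀ)⁻¹) * B := by simp only [Matrix.mul_assoc]
      _ = E * B := by rw [mul_nonsing_inv _ hB, Matrix.mul_one]
  calc constraintCorrection G (E * B) * F * constraintCorrection G B
      = G * (E * B)ᵀ * (E * B * G * (E * B)ᵀ)⁻¹ *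
          (E * B * (G * F * G) * Bᵀ * (B * G * Bᵀ)⁻¹ * B) * G := by
        simp only [constraintCorrection, Matrix.mul_assoc]
    _ = constraintCorrection G (E * B) := by
        rw [hGFG, hEB]
        rfl

theorem constraintCorrection_mul_mul_self [DecidableEq n] {G F : Matrix n n α} (hGF : G * F = 1)
    {B : Matrix m n α} (hB : IsUnit (B * G * Bᵀ).det) :
    constraintCorrection G B * F * constraintCorrection G B = constraintCorrection G B := by
  simpa only [Matrix.one_mul] using
    constraintCorrection_mul_mul_constraintCorrection hGF hB (1 : Matrix m m α)

end Correction

section Conjugation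

variable {m n : Type*} [Fintype n] {α : Type*} [CommSemiring α]

theorem IsSymm.mul_mul_transpose {D : Matrix n n α} (hD : D.IsSymm) (A : Matrix m n α) :
    (A * D * Aᵀ).IsSymm := by
  simp only [IsSymm, transpose_mul, transpose_transpose, hD.eq, Matrix.mul_assoc]

theorem isIdempotentElem_mul_mul_transpose [Fintype m] {D : Matrix n n α} {A : Matrix m n α}
    (hD : D * (Aᵀ * A) * D = D) : IsIdempotentElem (A * D * Aᵀ) :=
  calc A * D * Aᵀ * (A * D * Aᵀ) = A * (D * (Aᵀ * A) * D) * Aᵀ := by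
        simp only [Matrix.mul_assoc]
    _ = A * D * Aᵀ := by rw [hD]

end Conjugation

theorem PosDef.isUnit_det_mul_mul_transpose {m n : Type*} [Fintype m] [DecidableEq m]
    [Fintype n] {G : Matrix n n ℝ} (hG : G.PosDef) {B : Matrix m n ℝ}
    (hB : LinearIndependent ℝ B.row) : IsUnit (B * G * Bᵀ).det := by
  have hpos := hG.mul_mul_conjTranspose_same (vecMul_injective_iff.mpr hB)
  rw [conjTranspose_eq_transpose_of_trivial] at hpos
  exact (isUnit_iff_isUnit_det _).mp hpos.isUnit

end Matrix

theorem stmt16_general (k r : ℕ)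
    (F : Matrix (Fin k) (Fin k) ℝ) (hF : F.PosDef)
    (R : Matrix (Fin r) (Fin k) ℝ)
    (hR : LinearIndependent ℝ (fun i => (R i : Fin k → ℝ)))
    (S : Finset (Fin r))
    (RS : Matrix {x // x ∈ S} (Fin k) ℝ)
    (hRS : RS = R.submatrix Subtype.val id)
    (PS P : Matrix (Fin k) (Fin k) ℝ)
    (hPS : PS = F⁻¹ - F⁻¹ * RSᵀ * (RS * F⁻¹ * RSᵀ)⁻¹ * RS * F⁻¹)
    (hP : P = F⁻¹ - F⁻¹ * Rᵀ * (R * F⁻¹ * Rᵀ)⁻¹ * R * F⁻¹) :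
    (PS - P)ᵀ * F * (PS - P) = PS - P ∧
    ∀ A : Matrix (Fin k) (Fin k) ℝ, Aᵀ * A = F →
      (A * (PS - P) * Aᵀ)ᵀ = A * (PS - P) * Aᵀ ∧
      (A * (PS - P) * Aᵀ) * (A * (PS - P) * Aᵀ) = A * (PS - P) * Aᵀ := by
  have hGF : F⁻¹ * F = 1 := nonsing_inv_mul F ((isUnit_iff_isUnit_det F).mp hF.isUnit)
  have hFsymm : F.IsSymm := hF.isHermitian
  have hGsymm : F⁻¹.IsSymm := hF.inv.isHermitian
  have hRS_sel : RS = (1 : Matrix (Fin r) (Fin r) ℝ).submatrix Subtype.val (Equiv.refl _) * R :=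
    hRS.trans (one_submatrix_mul Subtype.val (Equiv.refl _) R).symm
  have hRunit := hF.inv.isUnit_det_mul_mul_transpose hR
  have hRSunit : IsUnit (RS * F⁻¹ * RSᵀ).det := by
    subst hRS
    exact hF.inv.isUnit_det_mul_mul_transpose (hR.comp Subtype.val Subtype.val_injective)
  have hD : PS - P = constraintCorrection F⁻¹ R - constraintCorrection F⁻¹ RS := by
    rw [hPS, hP]; unfold constraintCorrection; abel
  have hDsymm : (PS - P).IsSymm :=
    hD ▸ (hGsymm.constraintCorrection R).sub (hGsymm.constraintCorrection RS)
  have hSR : constraintCorrection F⁻¹ RS * F * constraintCorrection F⁻¹ R =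
      constraintCorrection F⁻¹ RS := by
    rw [hRS_sel]
    exact constraintCorrection_mul_mul_constraintCorrection hGF hRunit _
  have hRSR : constraintCorrection F⁻¹ R * F * constraintCorrection F⁻¹ RS =
      constraintCorrection F⁻¹ RS := by
    simpa only [transpose_mul, (hGsymm.constraintCorrection _).eq, hFsymm.eq,
      Matrix.mul_assoc] using congrArg transpose hSR
  have hDFD : (PS - P) * F * (PS - P) = PS - P := hD ▸ sub_mul_mul_sub_eq_sub
    (constraintCorrection_mul_mul_self hGF hRunit)
    (constraintCorrection_mul_mul_self hGF hRSunit) hRSR hSR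
  refine ⟨by rw [hDsymm.eq, hDFD], fun A hA => ⟨(hDsymm.mul_mul_transpose A).eq, ?_⟩⟩
  exact isIdempotentElem_mul_mul_transpose (hA ▸ hDFD)

/-- key step of the Proposition in the Appendix of the paper:
for a symmetric positive definite `F`, a full-row-rank `r×k` matrix `R` and the
submatrix `R(S)` of rows indexed by `S ⊆ {1,…,r}`, with
`P(S) = F⁻¹ − F⁻¹ R(S)ᵀ (R(S) F⁻¹ R(S)ᵀ)⁻¹ R(S) F⁻¹` and `P` the analogous
matrix for the full `R`, one has `(P(S) − P)ᵀ F (P(S) − P) = P(S) − P`;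
in particular `A (P(S) − P) Aᵀ` is symmetric and idempotent whenever `Aᵀ A = F`. -/
theorem stmt16 (k r : ℕ) (hrk : r ≤ k)
    (F : Matrix (Fin k) (Fin k) ℝ) (hF : F.PosDef)
    (R : Matrix (Fin r) (Fin k) ℝ)
    (hR : LinearIndependent ℝ (fun i => (R i : Fin k → ℝ)))
    (S : Finset (Fin r))
    (RS : Matrix {x // x ∈ S} (Fin k) ℝ)
    (hRS : RS = R.submatrix Subtype.val id)
    (PS P : Matrix (Fin k) (Fin k) ℝ)
    (hPS : PS = F⁻¹ - F⁻¹ * RSᵀ * (RS * F⁻¹ * RSᵀ)⁻¹ * RS * F⁻¹)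
    (hP : P = F⁻¹ - F⁻¹ * Rᵀ * (R * F⁻¹ * Rᵀ)⁻¹ * R * F⁻¹) :
    (PS - P)ᵀ * F * (PS - P) = PS - P ∧
    ∀ A : Matrix (Fin k) (Fin k) ℝ, Aᵀ * A = F →
      (A * (PS - P) * Aᵀ)ᵀ = A * (PS - P) * Aᵀ ∧
      (A * (PS - P) * Aᵀ) * (A * (PS - P) * Aᵀ) = A * (PS - P) * Aᵀ :=
  stmt16_general k r F hF R hR S RS hRS PS P hPS hP
end
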